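/- arXiv:1012.3185 — 2 statements merged into one kernel-verified Lean document; each statement's English description precedes it below -/
import Mathlib

section
/- In a category C with finite limits, if an ind-object Y of C is strict (representable by a filtered system of monomorphisms), then Y is semi-strict: for any two morphisms X → Y and Z → Y from compact objects X, Z, the fiber product X ×_Y Z in Ind(C) is compact. -/
open CategoryTheory CategoryTheory.Limits

universe v u

variable {C : Type u} [Category.{v} C]

/-- An object of `Ind C` is compact if it lies in the essential image of `C`. -/
noncomputable def IndCompact (X : Ind C) : Prop :=
  ∃ c : C, Nonempty (X ≅ Ind.yoneda.obj c)

/-- A morphism `f : X ⟶ Y` in `Ind C` is proper if for any `g : Z ⟶ Y` with `Z` compact,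
the pullback `X ×_Y Z` is compact. -/
noncomputable def IsProper [HasPullbacks (Ind C)] {X Y : Ind C} (f : X ⟶ Y) : Prop :=
  ∀ (Z : Ind C) (g : Z ⟶ Y), IndCompact Z → IndCompact (pullback f g)

/-- An ind-object `Y` is semi-strict if any map from a compact object to `Y` is proper. -/
noncomputable def IsSemiStrict [HasPullbacks (Ind C)] (Y : Ind C) : Prop :=
  ∀ (X : Ind C) (f : X ⟶ Y), IndCompact X → IsProper f

/-- An ind-object `Y` is strict if any map from a compact object to `Y` factors through a
compact object by a monomorphism. -/
noncomputable def IsStrict (Y : Ind C) : Prop :=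
  ∀ (X : Ind C) (f : X ⟶ Y), IndCompact X →
    ∃ (W : Ind C) (g : X ⟶ W) (i : W ⟶ Y), IndCompact W ∧ Mono i ∧ g ≫ i = f

/-!
Two maps `X ⟶ Y ⟵ Z` from compact objects factor through a common compact `V ⟶ Y`, because
the compact objects over an ind-object form a filtered category. Strictness factors `V ⟶ Y` as
`V ⟶ W ↪ Y` with `W` compact; as `W ⟶ Y` is mono, `X ×_Y Z ≅ X ×_W Z`, which is compact since
`Ind.yoneda` preserves pullbacks.
-/

lemma IndCompact.of_iso {X X' : Ind C} (e : X ≅ X') (hX : IndCompact X) : IndCompact X' :=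
  let ⟨c, ⟨eX⟩⟩ := hX
  ⟨c, ⟨e.symm ≪≫ eX⟩⟩

lemma indCompact_yoneda_obj (c : C) : IndCompact (Ind.yoneda.obj c) :=
  ⟨c, ⟨Iso.refl _⟩⟩

instance isFiltered_costructuredArrow_indYoneda (Y : Ind C) :
    IsFiltered (CostructuredArrow Ind.yoneda Y) :=
  haveI := (Ind.isIndObject_inclusion_obj Y).isFiltered
  IsFiltered.of_equivalence
    ((CostructuredArrow.post Ind.yoneda (Ind.inclusion C) Y).asEquivalence.trans
      (CostructuredArrow.mapNatIso Ind.yonedaCompInclusion)).symm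

lemma IndCompact.pullback [HasPullbacks C] [HasPullbacks (Ind C)] {X Z W : Ind C}
    (a : X ⟶ W) (b : Z ⟶ W) (hX : IndCompact X) (hZ : IndCompact Z) (hW : IndCompact W) :
    IndCompact (pullback a b) := by
  obtain ⟨x, ⟨eX⟩⟩ := hX
  obtain ⟨z, ⟨eZ⟩⟩ := hZ
  obtain ⟨w, ⟨eW⟩⟩ := hW
  let a' := Ind.yoneda.preimage (eX.inv ≫ a ≫ eW.hom)
  let b' := Ind.yoneda.preimage (eZ.inv ≫ b ≫ eW.hom)
  have : IndCompact (Limits.pullback (Ind.yoneda.map a') (Ind.yoneda.map b')) :=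
    (indCompact_yoneda_obj _).of_iso (PreservesPullback.iso Ind.yoneda a' b')
  refine this.of_iso (asIso (pullback.map _ _ a b eX.inv eZ.inv eW.inv ?_ ?_)) <;> simp [a', b']

lemma IndCompact.exists_common_factorization {X Z Y : Ind C} (f : X ⟶ Y) (g : Z ⟶ Y)
    (hX : IndCompact X) (hZ : IndCompact Z) :
    ∃ (V : Ind C) (f' : X ⟶ V) (g' : Z ⟶ V) (t : V ⟶ Y),
      IndCompact V ∧ f' ≫ t = f ∧ g' ≫ t = g := by
  obtain ⟨c, ⟨eX⟩⟩ := hX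
  obtain ⟨d, ⟨eZ⟩⟩ := hZ
  let F := CostructuredArrow.mk (Y := c) (S := Ind.yoneda) (eX.inv ≫ f)
  let G := CostructuredArrow.mk (Y := d) (S := Ind.yoneda) (eZ.inv ≫ g)
  refine ⟨_, eX.hom ≫ Ind.yoneda.map (IsFiltered.leftToMax F G).left,
    eZ.hom ≫ Ind.yoneda.map (IsFiltered.rightToMax F G).left, (IsFiltered.max F G).hom,
    indCompact_yoneda_obj _, ?_, ?_⟩
  · simp [F]
  · simp [G]

/-- In a category `C` with finite limits, if an ind-object `Y` is strict
(representable by a filtered system of monomorphisms) then it is semi-strict: for any two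
morphisms `X ⟶ Y` and `Z ⟶ Y` from compact objects, the fiber product `X ×_Y Z` in
`Ind C` is compact. -/
theorem stmt_7 [HasFiniteLimits C] [HasPullbacks (Ind C)] (Y : Ind C) (h : IsStrict Y) :
    IsSemiStrict Y := by
  intro X f hX Z g hZ
  obtain ⟨V, f', g', t, hV, rfl, rfl⟩ := hX.exists_common_factorization f g hZ
  obtain ⟨W, u, i, hW, hi, rfl⟩ := h V t hV
  have hP : IndCompact (pullback (f' ≫ u) (g' ≫ u)) := .pullback _ _ hX hZ hW
  rw [← Category.assoc f', ← Category.assoc g']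
  exact hP.of_iso
    (limit.isoLimitCone ⟨_, pullbackIsPullbackOfCompMono (f' ≫ u) (g' ≫ u) i⟩).symm
end

section
/- Let C be a Cartesian closed category with terminal object 1 and let Q be an object. Suppose t is a family of automorphisms t_X : Hom(1,X) → Hom(1,X) natural in X, fixing Hom(1, X) for X in the image of a subcategory. Let 1_Q : 1 → ul_Hom(Q,Q) be the point corresponding to the identity, and suppose that for all q in Hom(1,Q), ev(t(1_Q), t(q)) = q. Then the endomorphism of Hom(1,Q) induced by t(1_Q) is invertible with inverse t_Q. -/
open CategoryTheory CategoryTheory.Limits Opposite MonoidalCategory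
open CategoryTheory.CartesianClosed

universe v u v₀ u₀

/-- Let `C` be a Cartesian closed category with terminal object `1`, `Q` an
object, and `t` a natural automorphism of the global sections functor `Γ = Hom(1, −)`
fixing `Γ` on the image of a subcategory. If the point `t(1_Q)` of `ul_Hom(Q,Q)` (where
`1_Q` corresponds to `id_Q`) satisfies `ev(t(1_Q), t_Q(q)) = q` for all points `q` of `Q`,
then the endomorphism of `Hom(1,Q)` induced by `t(1_Q)` (namely `q ↦ ev(t(1_Q), q)`) is
invertible, with inverse `t_Q`. -/
theorem stmt_15 {C : Type u} [Category.{v} C] [CartesianMonoidalCategory C] [MonoidalClosed C]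
    {C₀ : Type u₀} [Category.{v₀} C₀] (I : C₀ ⥤ C) (Q : C)
    (t : (coyoneda.obj (op (𝟙_ C)) : C ⥤ Type v) ≅ coyoneda.obj (op (𝟙_ C)))
    (hfix : ∀ X₀ : C₀, t.hom.app (I.obj X₀) = 𝟙 _)
    (idPt : 𝟙_ C ⟶ (Q ⟹ Q))
    (hidPt : idPt = MonoidalClosed.curry (CartesianMonoidalCategory.fst Q (𝟙_ C)))
    (h : ∀ q : 𝟙_ C ⟶ Q,
      CartesianMonoidalCategory.lift (t.hom.app Q q) (t.hom.app (Q ⟹ Q) idPt) ≫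
        (ihom.ev Q).app Q = q) :
    Function.LeftInverse
        (fun q : 𝟙_ C ⟶ Q =>
          CartesianMonoidalCategory.lift q (t.hom.app (Q ⟹ Q) idPt) ≫ (ihom.ev Q).app Q)
        (t.hom.app Q) ∧
      Function.RightInverse
        (fun q : 𝟙_ C ⟶ Q =>
          CartesianMonoidalCategory.lift q (t.hom.app (Q ⟹ Q) idPt) ≫ (ihom.ev Q).app Q)
        (t.hom.app Q) := by
  constructor
  · intro q
    exact h q
  · intro q
    set a := t.hom.app (Q ⟹ Q) idPt with ha
    set m : Q ⟶ Q :=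
      CartesianMonoidalCategory.lift (𝟙 Q) (CartesianMonoidalCategory.toUnit Q ≫ a) ≫
        (ihom.ev Q).app Q with hm
    have key : ∀ p : 𝟙_ C ⟶ Q,
        CartesianMonoidalCategory.lift p a ≫ (ihom.ev Q).app Q = p ≫ m := by
      intro p
      have hu : p ≫ CartesianMonoidalCategory.toUnit Q ≫ a = a := by
        rw [← Category.assoc,
          CartesianMonoidalCategory.toUnit_unique (p ≫ CartesianMonoidalCategory.toUnit Q) (𝟙 _),
          Category.id_comp]
      rw [hm, ← Category.assoc, CartesianMonoidalCategory.comp_lift, Category.comp_id, hu]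
    have nat := FunctorToTypes.naturality (φ := t.hom) (f := m) (x := q)
    change t.hom.app Q (q ≫ m) = t.hom.app Q q ≫ m at nat
    calc t.hom.app Q (CartesianMonoidalCategory.lift q a ≫ (ihom.ev Q).app Q)
        = t.hom.app Q (q ≫ m) := by rw [key]
      _ = t.hom.app Q q ≫ m := nat
      _ = CartesianMonoidalCategory.lift (t.hom.app Q q) a ≫ (ihom.ev Q).app Q := (key _).symm
      _ = q := h q
end
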